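/- Let p ≥ 1, and for i = 1,…,p let Aᵢ ∈ ℝ^{m×n_i} and βᵢ > 0, and let δ > 0. Then for every p-tuple (x₁,…,x_p) with xᵢ ∈ ℝ^{n_i} and every λ ∈ ℝᵐ, Σ_{i=1}^p βᵢ‖xᵢ‖² − 2λᵀ(Σ_{i=1}^p Aᵢxᵢ) + λᵀ(Σ_{i=1}^p (1/βᵢ)AᵢAᵢᵀ + δIₘ)λ = Σ_{i=1}^p ‖(1/√βᵢ)Aᵢᵀλ − √βᵢ xᵢ‖² + δ‖λ‖²; in particular this quantity is strictly positive whenever (x₁,…,x_p,λ) ≠ 0, i.e. the block matrix H with diagonal blocks β₁I_{n₁},…,β_pI_{n_p}, M_p = Σ_{i=1}^p (1/βᵢ)AᵢAᵢᵀ + δIₘ and off-diagonal blocks −Aᵢᵀ (and −Aᵢ) is positive definite. -/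

import Mathlib

/-!
Completing the square block by block: with `uᵢ = Aᵢᵀ λ`, the `i`-th block of the quadratic
form of `H` contributes `βᵢ‖xᵢ‖² − 2 uᵢᵀxᵢ + ‖uᵢ‖²/βᵢ = ‖uᵢ/√βᵢ − √βᵢ xᵢ‖²`, and the term
`δ Iₘ` of `M_p` leaves `δ‖λ‖²` over. Hence the form is positive as soon as `λ ≠ 0`; for
`λ = 0` it reduces to `Σᵢ βᵢ‖xᵢ‖²`, positive as soon as some `xᵢ ≠ 0`.
-/

open Matrix

section DotProduct

variable {μ κ : Type*} [Fintype μ] [Fintype κ]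

theorem dotProduct_self_nonneg {R : Type*} [Ring R] [LinearOrder R] [IsStrictOrderedRing R]
    (v : μ → R) : 0 ≤ v ⬝ᵥ v :=
  Fintype.sum_nonneg fun i => mul_self_nonneg (v i)

theorem dotProduct_self_pos {R : Type*} [Ring R] [LinearOrder R] [IsStrictOrderedRing R]
    {v : μ → R} (hv : v ≠ 0) : 0 < v ⬝ᵥ v :=
  (dotProduct_self_nonneg v).lt_of_ne' (mt dotProduct_self_eq_zero.1 hv)

theorem dotProduct_mulVec_eq_transpose_mulVec_dotProduct {R : Type*} [CommSemiring R]
    (A : Matrix μ κ R) (v : μ → R) (x : κ → R) : v ⬝ᵥ A *ᵥ x = (Aᵀ *ᵥ v) ⬝ᵥ x := by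
  rw [dotProduct_mulVec, mulVec_transpose]

theorem dotProduct_mul_transpose_mulVec {R : Type*} [CommSemiring R]
    (A : Matrix μ κ R) (v : μ → R) : v ⬝ᵥ (A * Aᵀ) *ᵥ v = (Aᵀ *ᵥ v) ⬝ᵥ (Aᵀ *ᵥ v) := by
  rw [← mulVec_mulVec, dotProduct_mulVec_eq_transpose_mulVec_dotProduct]

theorem inv_sqrt_smul_sub_sqrt_smul_dotProduct_self {b : ℝ} (hb : 0 < b) (u x : κ → ℝ) :
    ((1 / √b) • u - √b • x) ⬝ᵥ ((1 / √b) • u - √b • x) =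
      (1 / b) * (u ⬝ᵥ u) - 2 * (u ⬝ᵥ x) + b * (x ⬝ᵥ x) := by
  obtain ⟨s, hs, rfl⟩ : ∃ s, 0 < s ∧ s ^ 2 = b := ⟨√b, Real.sqrt_pos.2 hb, Real.sq_sqrt hb.le⟩
  simp only [Real.sqrt_sq hs.le, dotProduct_sub, sub_dotProduct, smul_dotProduct, dotProduct_smul,
    smul_eq_mul, dotProduct_comm x u]
  field_simp
  ring

end DotProduct

section BalancedALM

variable {ι μ : Type*} [Fintype ι] [Fintype μ] [DecidableEq μ]
  {κ : ι → Type*} [∀ i, Fintype (κ i)]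

/-- The quadratic form `wᵀHw` of the dual-primal balanced ALM matrix at `w = (x, λ)`. -/
noncomputable def balancedALMQuadForm (A : ∀ i, Matrix μ (κ i) ℝ) (β : ι → ℝ) (δ : ℝ)
    (x : ∀ i, κ i → ℝ) (lam : μ → ℝ) : ℝ :=
  (∑ i, β i * (x i ⬝ᵥ x i)) - 2 * (lam ⬝ᵥ ∑ i, A i *ᵥ x i) +
    lam ⬝ᵥ (((∑ i, (1 / β i) • (A i * (A i)ᵀ)) + δ • (1 : Matrix μ μ ℝ)) *ᵥ lam)

variable (A : ∀ i, Matrix μ (κ i) ℝ) {β : ι → ℝ} (δ : ℝ) (x : ∀ i, κ i → ℝ)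

theorem balancedALMQuadForm_eq_sum_add (hβ : ∀ i, 0 < β i) (lam : μ → ℝ) :
    balancedALMQuadForm A β δ x lam =
      (∑ i, ((1 / √(β i)) • ((A i)ᵀ *ᵥ lam) - √(β i) • x i) ⬝ᵥ
          ((1 / √(β i)) • ((A i)ᵀ *ᵥ lam) - √(β i) • x i)) + δ * (lam ⬝ᵥ lam) := by
  simp only [inv_sqrt_smul_sub_sqrt_smul_dotProduct_self (hβ _), balancedALMQuadForm,
    add_mulVec, dotProduct_add, sum_mulVec, smul_mulVec, one_mulVec, dotProduct_sum,
    dotProduct_smul, smul_eq_mul, dotProduct_mul_transpose_mulVec, Finset.mul_sum,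
    Finset.sum_add_distrib, Finset.sum_sub_distrib]
  simp only [dotProduct_mulVec_eq_transpose_mulVec_dotProduct]
  ring

theorem balancedALMQuadForm_zero_right (β : ι → ℝ) :
    balancedALMQuadForm A β δ x 0 = ∑ i, β i * (x i ⬝ᵥ x i) := by
  simp [balancedALMQuadForm]

theorem balancedALMQuadForm_pos (hβ : ∀ i, 0 < β i) (hδ : 0 < δ) {lam : μ → ℝ}
    (hw : ¬(x = 0 ∧ lam = 0)) : 0 < balancedALMQuadForm A β δ x lam := by
  rcases eq_or_ne lam 0 with rfl | hlam
  · obtain ⟨i, hi⟩ := Function.ne_iff.1 fun hx => hw ⟨hx, rfl⟩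
    rw [balancedALMQuadForm_zero_right]
    exact Finset.sum_pos'
      (fun j _ => mul_nonneg (hβ j).le (dotProduct_self_nonneg _))
      ⟨i, Finset.mem_univ i, mul_pos (hβ i) (dotProduct_self_pos hi)⟩
  · rw [balancedALMQuadForm_eq_sum_add A δ x hβ]
    exact add_pos_of_nonneg_of_pos (Finset.sum_nonneg fun i _ => dotProduct_self_nonneg _)
      (mul_pos hδ (dotProduct_self_pos hlam))

end BalancedALM

theorem stmt_15_general {p m : ℕ} (n : Fin p → ℕ)
    (A : ∀ i : Fin p, Matrix (Fin m) (Fin (n i)) ℝ)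
    (β : Fin p → ℝ) (hβ : ∀ i, 0 < β i) (δ : ℝ) (hδ : 0 < δ) :
    (∀ (x : ∀ i : Fin p, Fin (n i) → ℝ) (lam : Fin m → ℝ),
      (∑ i, β i * (x i ⬝ᵥ x i)) - 2 * (lam ⬝ᵥ ∑ i, A i *ᵥ x i) +
          lam ⬝ᵥ (((∑ i, (1 / β i) • (A i * (A i)ᵀ)) + δ • (1 : Matrix (Fin m) (Fin m) ℝ)) *ᵥ lam) =
        (∑ i, ((1 / Real.sqrt (β i)) • ((A i)ᵀ *ᵥ lam) - Real.sqrt (β i) • x i) ⬝ᵥ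
            ((1 / Real.sqrt (β i)) • ((A i)ᵀ *ᵥ lam) - Real.sqrt (β i) • x i)) +
          δ * (lam ⬝ᵥ lam)) ∧
    (∀ (x : ∀ i : Fin p, Fin (n i) → ℝ) (lam : Fin m → ℝ), ¬(x = 0 ∧ lam = 0) →
      0 < (∑ i, β i * (x i ⬝ᵥ x i)) - 2 * (lam ⬝ᵥ ∑ i, A i *ᵥ x i) +
          lam ⬝ᵥ (((∑ i, (1 / β i) • (A i * (A i)ᵀ)) + δ • (1 : Matrix (Fin m) (Fin m) ℝ)) *ᵥ lam)) :=
  ⟨fun x lam => balancedALMQuadForm_eq_sum_add A δ x hβ lam,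
    fun x _ hw => balancedALMQuadForm_pos A δ x hβ hδ hw⟩

/-- For `p ≥ 1`, `Aᵢ ∈ ℝ^{m×nᵢ}`, `βᵢ > 0`, `δ > 0`, the quadratic form of the
block matrix `H` (diagonal blocks `βᵢ I`, `M_p = Σᵢ (1/βᵢ) Aᵢ Aᵢᵀ + δ Iₘ`, off-diagonal blocks
`-Aᵢᵀ`, `-Aᵢ`) satisfies
`Σᵢ βᵢ ‖xᵢ‖² - 2 λᵀ Σᵢ Aᵢ xᵢ + λᵀ M_p λ = Σᵢ ‖(1/√βᵢ) Aᵢᵀ λ - √βᵢ xᵢ‖² + δ ‖λ‖²`,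
and this quantity is strictly positive whenever `(x₁,…,x_p,λ) ≠ 0`, i.e. `H` is positive
definite. -/
theorem stmt_15 {p m : ℕ} (hp : 1 ≤ p) (n : Fin p → ℕ)
    (A : ∀ i : Fin p, Matrix (Fin m) (Fin (n i)) ℝ)
    (β : Fin p → ℝ) (hβ : ∀ i, 0 < β i) (δ : ℝ) (hδ : 0 < δ) :
    (∀ (x : ∀ i : Fin p, Fin (n i) → ℝ) (lam : Fin m → ℝ),
      (∑ i, β i * (x i ⬝ᵥ x i)) - 2 * (lam ⬝ᵥ ∑ i, A i *ᵥ x i) +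
          lam ⬝ᵥ (((∑ i, (1 / β i) • (A i * (A i)ᵀ)) + δ • (1 : Matrix (Fin m) (Fin m) ℝ)) *ᵥ lam) =
        (∑ i, ((1 / Real.sqrt (β i)) • ((A i)ᵀ *ᵥ lam) - Real.sqrt (β i) • x i) ⬝ᵥ
            ((1 / Real.sqrt (β i)) • ((A i)ᵀ *ᵥ lam) - Real.sqrt (β i) • x i)) +
          δ * (lam ⬝ᵥ lam)) ∧
    (∀ (x : ∀ i : Fin p, Fin (n i) → ℝ) (lam : Fin m → ℝ), ¬(x = 0 ∧ lam = 0) →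
      0 < (∑ i, β i * (x i ⬝ᵥ x i)) - 2 * (lam ⬝ᵥ ∑ i, A i *ᵥ x i) +
          lam ⬝ᵥ (((∑ i, (1 / β i) • (A i * (A i)ᵀ)) + δ • (1 : Matrix (Fin m) (Fin m) ℝ)) *ᵥ lam)) :=
  stmt_15_general n A β hβ δ hδ
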